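/- Let r ∈ ℕ, r ≥ 1, n = 2^r. For all 0 ≤ j, l ≤ r−1, the coherence of the Fourier–Haar block U_{jl} satisfies μ(U_{jl}) ≤ (π⁴/16) · 2^{−j} · 2^{−|j−l|}. -/

import Mathlib

/-- The discrete Fourier transform of `x ∈ ℂ^(2^r)`:
`Fx(ω) = n^{-1/2} ∑_{t=0}^{n-1} x(t) e^{2πiωt/n}` with `n = 2^r`. -/
noncomputable def dft (r : ℕ) (x : Fin (2^r) → ℂ) (ω : ℤ) : ℂ :=
  (Real.sqrt (2^r) : ℂ)⁻¹ *
    ∑ t : Fin (2^r), x t * Complex.exp (2 * Real.pi * Complex.I * (ω : ℂ) * ((t : ℕ) : ℂ) / (2^r : ℂ))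

/-- The Haar scaling vector `ψ(t) = 2^{-r/2}`. -/
noncomputable def haarPsi (r : ℕ) : Fin (2^r) → ℂ :=
  fun _ => (((2:ℝ) ^ (-(r:ℝ)/2) : ℝ) : ℂ)

/-- The discrete Haar wavelet at scale `j` and position `p`. -/
noncomputable def haarPhi (r j p : ℕ) : Fin (2^r) → ℂ := fun t =>
  if p * 2^(r-j) ≤ (t:ℕ) ∧ (t:ℕ) < p * 2^(r-j) + 2^(r-j-1) then
    (((2:ℝ) ^ (((j:ℝ) - r)/2) : ℝ) : ℂ)
  else if p * 2^(r-j) + 2^(r-j-1) ≤ (t:ℕ) ∧ (t:ℕ) < (p+1) * 2^(r-j) then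
    -(((2:ℝ) ^ (((j:ℝ) - r)/2) : ℝ) : ℂ)
  else 0

/-- The frequency bands: `W_0 = {0,1}` and
`W_j = {-2^j+1,…,-2^{j-1}} ∪ {2^{j-1}+1,…,2^j}` for `j ≥ 1`. -/
noncomputable def bandW (j : ℕ) : Finset ℤ :=
  if j = 0 then {0, 1}
  else Finset.Icc (-(2:ℤ)^j + 1) (-(2:ℤ)^(j-1)) ∪ Finset.Icc ((2:ℤ)^(j-1) + 1) ((2:ℤ)^j)

theorem bandW_nonempty (j : ℕ) : (bandW j).Nonempty := by
  unfold bandW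
  split
  · exact ⟨0, by simp⟩
  · refine Finset.Nonempty.mono Finset.subset_union_right ⟨(2:ℤ)^j, ?_⟩
    rw [Finset.mem_Icc]
    refine ⟨?_, le_refl _⟩
    have h1 : (1:ℤ) ≤ (2:ℤ)^(j-1) := one_le_pow₀ (by norm_num)
    have h2 : (2:ℤ)^(j-1) + (2:ℤ)^(j-1) ≤ (2:ℤ)^j := by
      rw [← two_mul, ← pow_succ']
      exact pow_le_pow_right₀ (by norm_num) (by omega)
    omega

/-- The number of columns of the Fourier–Haar block `U_{jl}`: level `0` contributes the two
vectors `ψ, φ_{0,0}`, and level `l ≥ 1` contributes the `2^l` wavelets `φ_{l,p}`. -/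
def numCols (l : ℕ) : ℕ := if l = 0 then 2 else 2^l

theorem numCols_pos (l : ℕ) : 0 < numCols l := by
  unfold numCols; split <;> positivity

/-- The entry of the Fourier–Haar block `U_{jl}` in row `ω` and column `q`. -/
noncomputable def Uentry (r l : ℕ) (ω : ℤ) (q : ℕ) : ℂ :=
  if l = 0 then (if q = 0 then dft r (haarPsi r) ω else dft r (haarPhi r 0 0) ω)
  else dft r (haarPhi r l q) ω

/-- The coherence `μ(U_{jl}) = max_{ω,q} |(U_{jl})_{ω,q}|²` of the Fourier–Haar block. -/
noncomputable def coherence (r j l : ℕ) : ℝ :=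
  ((bandW j) ×ˢ Finset.range (numCols l)).sup'
    (Finset.Nonempty.product (bandW_nonempty j)
      ⟨0, Finset.mem_range.mpr (numCols_pos l)⟩)
    (fun q => ‖Uentry r l q.1 q.2‖ ^ 2)

/-- The Fourier–Haar block `U_{jl}`, with rows indexed by `ω ∈ W_j` and columns given by the
DFT of the level-`l` Haar vectors. -/
noncomputable def Umat (r j l : ℕ) : Matrix (bandW j) (Fin (numCols l)) ℂ :=
  fun ω q => Uentry r l (ω : ℤ) (q : ℕ)

/-- The `ℓ² → ℓ²` operator norm (largest singular value) of the Fourier–Haar block. -/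
noncomputable def UopNorm (r j l : ℕ) : ℝ :=
  ‖LinearMap.toContinuousLinearMap (Matrix.toEuclideanLin (Umat r j l))‖

/-- The `(j,l)`-th local coherence `μ(j,l) = √μ(U_{jl}) · max_{l' < r} √μ(U_{jl'})`. -/
noncomputable def localCoh (r : ℕ) (hr : 1 ≤ r) (j l : ℕ) : ℝ :=
  Real.sqrt (coherence r j l) *
    (Finset.range r).sup' ⟨0, Finset.mem_range.mpr hr⟩
      (fun l' => Real.sqrt (coherence r j l'))

/-!
Write `z = e^{2πiω/2^r}`. The transform of the Haar scaling vector is a full geometric sum in `z`,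
which vanishes unless `ω = 0`. The wavelet `φ_{l,p}` is a block of `h = 2^{r-l-1}` equal values
followed by `h` opposite ones, so its transform telescopes to
`|Fφ_{l,p}(ω)|² |z - 1|² = 2^l 4^{-r} |z^h - 1|⁴`. With `|z^h - 1| ≤ 2 min(1, π|ω|/2^{l+1})` and,
by Jordan's inequality, `|z - 1| ≥ 4|ω|/2^r`, this gives
`|Fφ_{l,p}(ω)|² ≤ 2^l min(1, π|ω|/2^{l+1})⁴ / ω²`.
On `W_j` we have `2^{j-1} ≤ |ω| ≤ 2^j`; taking the `1` in the minimum when `l ≤ j` and the linear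
term when `j ≤ l` bounds this by `(π⁴/16) 2^l 4^{-max(j,l)} = (π⁴/16) 2^{-j} 2^{-|j-l|}`.
-/

open Finset
open scoped Real

lemma geom_sum_Ico_sub_geom_sum_Ico_mul {R : Type*} [CommRing R] (x : R) (a h : ℕ) :
    (∑ i ∈ Ico a (a + h), x ^ i - ∑ i ∈ Ico (a + h) (a + h + h), x ^ i) * (x - 1) =
      -(x ^ a * (x ^ h - 1) ^ 2) := by
  rw [sub_mul, geom_sum_Ico_mul _ (by omega), geom_sum_Ico_mul _ (by omega)]
  ring

noncomputable def dftRoot (r : ℕ) (ω : ℤ) : ℂ := Complex.exp (Complex.I * ↑(2 * π * ω / 2 ^ r))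

lemma dftRoot_pow (r : ℕ) (ω : ℤ) (k : ℕ) :
    dftRoot r ω ^ k = Complex.exp (Complex.I * ↑(2 * π * ω * k / 2 ^ r)) := by
  rw [dftRoot, ← Complex.exp_nat_mul]
  push_cast
  ring_nf

lemma norm_dftRoot (r : ℕ) (ω : ℤ) : ‖dftRoot r ω‖ = 1 :=
  Complex.norm_exp_I_mul_ofReal _

lemma dft_eq_sum_dftRoot_pow (r : ℕ) (x : Fin (2 ^ r) → ℂ) (ω : ℤ) :
    dft r x ω = (Real.sqrt (2 ^ r) : ℂ)⁻¹ * ∑ t : Fin (2 ^ r), x t * dftRoot r ω ^ (t : ℕ) := by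
  simp only [dft, dftRoot_pow]
  congr! 4
  push_cast
  ring_nf

lemma dftRoot_pow_two_pow (r : ℕ) (ω : ℤ) : dftRoot r ω ^ 2 ^ r = 1 := by
  rw [dftRoot_pow, ← Complex.exp_int_mul_two_pi_mul_I ω]
  congr 1
  push_cast
  field_simp

lemma norm_dftRoot_pow_sub_one (r : ℕ) (ω : ℤ) (k : ℕ) :
    ‖dftRoot r ω ^ k - 1‖ = 2 * |Real.sin (π * ω * k / 2 ^ r)| := by
  rw [dftRoot_pow, Complex.norm_exp_I_mul_ofReal_sub_one, norm_mul, Real.norm_ofNat,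
    Real.norm_eq_abs]
  ring_nf

lemma norm_dftRoot_pow_sub_one_le (r : ℕ) (ω : ℤ) (k : ℕ) :
    ‖dftRoot r ω ^ k - 1‖ ≤ 2 * min 1 (π * |(ω : ℝ)| * k / 2 ^ r) := by
  rw [norm_dftRoot_pow_sub_one]
  gcongr
  refine le_min (Real.abs_sin_le_one _) (Real.abs_sin_le_abs.trans_eq ?_)
  rw [abs_div, abs_mul, abs_mul, abs_of_pos Real.pi_pos, Nat.abs_cast,
    abs_of_pos (by positivity : (0 : ℝ) < 2 ^ r)]

lemma four_mul_abs_div_le_norm_dftRoot_sub_one {r : ℕ} {ω : ℤ} (hω : 2 * |(ω : ℝ)| ≤ 2 ^ r) :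
    4 * |(ω : ℝ)| / 2 ^ r ≤ ‖dftRoot r ω - 1‖ := by
  have habs : |π * ω / 2 ^ r| = π * |(ω : ℝ)| / 2 ^ r := by
    rw [abs_div, abs_mul, abs_of_pos Real.pi_pos, abs_of_pos (by positivity : (0 : ℝ) < 2 ^ r)]
  have hjordan := Real.mul_abs_le_abs_sin (x := π * ω / 2 ^ r) (by
    rw [habs, div_le_div_iff₀ (by positivity) two_pos]
    nlinarith [Real.pi_pos])
  rw [← pow_one (dftRoot r ω), norm_dftRoot_pow_sub_one, Nat.cast_one, mul_one]
  rw [habs] at hjordan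
  calc 4 * |(ω : ℝ)| / 2 ^ r = 2 * (2 / π * (π * |(ω : ℝ)| / 2 ^ r)) := by
        field_simp; ring
    _ ≤ _ := by gcongr

lemma dftRoot_ne_one {r : ℕ} {ω : ℤ} (hω0 : ω ≠ 0) (hω : 2 * |(ω : ℝ)| ≤ 2 ^ r) :
    dftRoot r ω ≠ 1 := by
  rw [← sub_ne_zero, ← norm_pos_iff]
  exact lt_of_lt_of_le (by positivity) (four_mul_abs_div_le_norm_dftRoot_sub_one hω)

lemma two_rpow_neg_half (r : ℕ) : (2 : ℝ) ^ (-(r : ℝ) / 2) = (Real.sqrt (2 ^ r))⁻¹ := by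
  rw [Real.sqrt_eq_rpow, ← Real.rpow_natCast, ← Real.rpow_mul zero_le_two, neg_div,
    Real.rpow_neg zero_le_two]
  ring_nf

lemma dft_haarPsi_zero (r : ℕ) : dft r (haarPsi r) 0 = 1 := by
  have hsq : (Real.sqrt (2 ^ r) : ℂ) ^ 2 = 2 ^ r := by
    rw [← Complex.ofReal_pow, Real.sq_sqrt (by positivity)]
    push_cast; rfl
  have hne : (Real.sqrt (2 ^ r) : ℂ) ≠ 0 := by
    rw [Complex.ofReal_ne_zero]; positivity
  simp only [dft, haarPsi, two_rpow_neg_half, Int.cast_zero, mul_zero, zero_mul, zero_div,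
    Complex.exp_zero, mul_one, sum_const, card_univ, Fintype.card_fin, nsmul_eq_mul]
  push_cast
  field_simp
  exact hsq.symm

lemma dft_haarPsi_of_ne_zero {r : ℕ} {ω : ℤ} (hω0 : ω ≠ 0) (hω : 2 * |(ω : ℝ)| ≤ 2 ^ r) :
    dft r (haarPsi r) ω = 0 := by
  have hgeom : ∑ t ∈ range (2 ^ r), dftRoot r ω ^ t = 0 := by
    have := geom_sum_mul (dftRoot r ω) (2 ^ r)
    rw [dftRoot_pow_two_pow, sub_self] at this
    exact (mul_eq_zero.1 this).resolve_right (sub_ne_zero.2 (dftRoot_ne_one hω0 hω))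
  rw [dft_eq_sum_dftRoot_pow]
  simp only [haarPsi]
  rw [← mul_sum, Fin.sum_univ_eq_sum_range (dftRoot r ω ^ ·), hgeom, mul_zero, mul_zero]

lemma sum_haarPhi_mul {r l p : ℕ} (hl : l < r) (hp : p < 2 ^ l) (g : ℕ → ℂ) :
    ∑ t : Fin (2 ^ r), haarPhi r l p t * g t =
      (((2 : ℝ) ^ (((l : ℝ) - r) / 2) : ℝ) : ℂ) *
        (∑ t ∈ Ico (p * 2 ^ (r - l)) (p * 2 ^ (r - l) + 2 ^ (r - l - 1)), g t -
          ∑ t ∈ Ico (p * 2 ^ (r - l) + 2 ^ (r - l - 1))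
            (p * 2 ^ (r - l) + 2 ^ (r - l - 1) + 2 ^ (r - l - 1)), g t) := by
  set c : ℂ := (((2 : ℝ) ^ (((l : ℝ) - r) / 2) : ℝ) : ℂ)
  obtain ⟨a, ha⟩ : ∃ a, p * 2 ^ (r - l) = a := ⟨_, rfl⟩
  obtain ⟨h, hh⟩ : ∃ h, 2 ^ (r - l - 1) = h := ⟨_, rfl⟩
  rw [ha, hh]
  have hsplit : 2 ^ (r - l) = h + h := by
    rw [← hh, ← two_mul, ← pow_succ', Nat.sub_add_cancel (Nat.sub_pos_of_lt hl)]
  have hfit : a + h + h ≤ 2 ^ r :=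
    calc a + h + h = (p + 1) * 2 ^ (r - l) := by rw [← ha, hsplit]; ring
      _ ≤ 2 ^ l * 2 ^ (r - l) := Nat.mul_le_mul_right _ hp
      _ = 2 ^ r := by rw [← pow_add, Nat.add_sub_cancel' hl.le]
  have hpoint : ∀ t : Fin (2 ^ r), haarPhi r l p t * g t =
      c * ((if (t : ℕ) ∈ Ico a (a + h) then g t else 0) -
        if (t : ℕ) ∈ Ico (a + h) (a + h + h) then g t else 0) := by
    intro t
    simp only [haarPhi, mem_Ico, add_mul, one_mul, ha, hh]
    split_ifs <;> first | omega | ring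
  have hsub : ∀ b, Ico b (b + h) ⊆ Ico a (a + h + h) → Ico b (b + h) ⊆ range (2 ^ r) :=
    fun b hb => hb.trans fun t ht => mem_range.2 ((mem_Ico.1 ht).2.trans_le hfit)
  simp only [hpoint, ← mul_sum, sum_sub_distrib]
  rw [Fin.sum_univ_eq_sum_range (fun t => if t ∈ Ico a (a + h) then g t else 0),
    Fin.sum_univ_eq_sum_range (fun t => if t ∈ Ico (a + h) (a + h + h) then g t else 0),
    sum_ite_mem, sum_ite_mem,
    inter_eq_right.2 (hsub a (Ico_subset_Ico_right (Nat.le_add_right _ _))),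
    inter_eq_right.2 (hsub (a + h) (Ico_subset_Ico_left (Nat.le_add_right _ _)))]

lemma dft_haarPhi_zero {r l p : ℕ} (hl : l < r) (hp : p < 2 ^ l) :
    dft r (haarPhi r l p) 0 = 0 := by
  have hroot : dftRoot r 0 = 1 := by simp [dftRoot]
  rw [dft_eq_sum_dftRoot_pow, hroot]
  simp only [one_pow]
  rw [sum_haarPhi_mul hl hp (fun _ => 1)]
  simp

lemma sq_two_rpow_sub_div_two (l r : ℕ) :
    ((2 : ℝ) ^ (((l : ℝ) - r) / 2)) ^ 2 = 2 ^ l / 2 ^ r := by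
  rw [← Real.rpow_natCast, ← Real.rpow_mul zero_le_two, Nat.cast_two,
    div_mul_cancel₀ _ two_ne_zero, Real.rpow_sub two_pos, Real.rpow_natCast, Real.rpow_natCast]

lemma sq_norm_dft_haarPhi_mul {r l p : ℕ} (hl : l < r) (hp : p < 2 ^ l) (ω : ℤ) :
    ‖dft r (haarPhi r l p) ω‖ ^ 2 * ‖dftRoot r ω - 1‖ ^ 2 =
      2 ^ l / (2 ^ r) ^ 2 * ‖dftRoot r ω ^ 2 ^ (r - l - 1) - 1‖ ^ 4 := by
  rw [dft_eq_sum_dftRoot_pow, sum_haarPhi_mul hl hp (dftRoot r ω ^ ·), ← mul_pow, ← norm_mul,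
    mul_assoc, mul_assoc, geom_sum_Ico_sub_geom_sum_Ico_mul]
  simp only [norm_mul, norm_neg, norm_pow, norm_inv, Complex.norm_real, norm_dftRoot, one_pow,
    one_mul, Real.norm_eq_abs, abs_of_nonneg (Real.sqrt_nonneg _),
    abs_of_nonneg (Real.rpow_nonneg zero_le_two _)]
  rw [mul_pow, mul_pow, inv_pow, Real.sq_sqrt (by positivity), sq_two_rpow_sub_div_two]
  ring

lemma sq_norm_dft_haarPhi_le {r l p : ℕ} (hl : l < r) (hp : p < 2 ^ l) {ω : ℤ} (hω0 : ω ≠ 0)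
    (hω : 2 * |(ω : ℝ)| ≤ 2 ^ r) :
    ‖dft r (haarPhi r l p) ω‖ ^ 2 ≤
      2 ^ l * min 1 (π * |(ω : ℝ)| / 2 ^ (l + 1)) ^ 4 / |(ω : ℝ)| ^ 2 := by
  have hlower := four_mul_abs_div_le_norm_dftRoot_sub_one hω
  have hupper : ‖dftRoot r ω ^ 2 ^ (r - l - 1) - 1‖ ≤
      2 * min 1 (π * |(ω : ℝ)| / 2 ^ (l + 1)) := by
    refine (norm_dftRoot_pow_sub_one_le r ω _).trans_eq ?_
    have : (2 : ℝ) ^ (r - l - 1) * 2 ^ (l + 1) = 2 ^ r := by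
      rw [← pow_add]; congr 1; omega
    rw [Nat.cast_pow, Nat.cast_two, ← this]
    field_simp
  calc ‖dft r (haarPhi r l p) ω‖ ^ 2
      = 2 ^ l / (2 ^ r) ^ 2 * ‖dftRoot r ω ^ 2 ^ (r - l - 1) - 1‖ ^ 4 /
          ‖dftRoot r ω - 1‖ ^ 2 := by
        rw [← sq_norm_dft_haarPhi_mul hl hp, mul_div_cancel_right₀]
        exact pow_ne_zero _ (lt_of_lt_of_le (by positivity) hlower).ne'
    _ ≤ 2 ^ l / (2 ^ r) ^ 2 * (2 * min 1 (π * |(ω : ℝ)| / 2 ^ (l + 1))) ^ 4 /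
          (4 * |(ω : ℝ)| / 2 ^ r) ^ 2 := by
        gcongr
    _ = _ := by
        field_simp
        ring

lemma mem_bandW_cases {j : ℕ} {ω : ℤ} (hω : ω ∈ bandW j) :
    (j = 0 ∧ ω = 0) ∨ ((2 : ℝ) ^ j ≤ 2 * |(ω : ℝ)| ∧ |(ω : ℝ)| ≤ 2 ^ j) := by
  suffices (j = 0 ∧ ω = 0) ∨ (2 ^ j ≤ 2 * |ω| ∧ |ω| ≤ 2 ^ j) by exact_mod_cast this
  unfold bandW at hω
  split_ifs at hω with hj
  · subst hj
    simp only [mem_insert, mem_singleton] at hω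
    rcases hω with rfl | rfl <;> simp
  · obtain ⟨k, rfl⟩ : ∃ k, j = k + 1 := ⟨j - 1, by omega⟩
    simp only [Nat.add_sub_cancel, mem_union, mem_Icc, pow_succ] at hω ⊢
    have : (0 : ℤ) < 2 ^ k := by positivity
    right
    rcases hω with ⟨h₁, h₂⟩ | ⟨h₁, h₂⟩
    · rw [abs_of_neg (by omega)]; omega
    · rw [abs_of_pos (by omega)]; omega

lemma Uentry_cases (r : ℕ) (ω : ℤ) {l q : ℕ} (hq : q < numCols l) :
    (l = 0 ∧ Uentry r l ω q = dft r (haarPsi r) ω) ∨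
      ∃ p < 2 ^ l, Uentry r l ω q = dft r (haarPhi r l p) ω := by
  unfold Uentry
  unfold numCols at hq
  split_ifs with hl hq0
  · exact Or.inl ⟨hl, rfl⟩
  · subst hl
    exact Or.inr ⟨0, Nat.one_pos, rfl⟩
  · simp only [hl, if_false] at hq
    exact Or.inr ⟨q, hq, rfl⟩

lemma two_rpow_neg_mul_two_rpow_neg_abs_sub (j l : ℕ) :
    (2 : ℝ) ^ (-(j : ℝ)) * 2 ^ (-|(j : ℝ) - l|) = 2 ^ l / 4 ^ max j l := by
  have hexp : -(j : ℝ) + -|(j : ℝ) - l| = l - ((2 * max j l : ℕ) : ℝ) := by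
    rcases le_total j l with h | h
    · rw [abs_of_nonpos (by simpa using h), max_eq_right h]; push_cast; ring
    · rw [abs_of_nonneg (by simpa using h), max_eq_left h]; push_cast; ring
  rw [← Real.rpow_add two_pos, hexp, Real.rpow_sub two_pos, Real.rpow_natCast,
    Real.rpow_natCast, pow_mul]
  norm_num

lemma four_le_pi_pow_four_div_sixteen : 4 ≤ π ^ 4 / 16 := by
  have h3 := Real.pi_gt_three
  have h9 : 9 < π ^ 2 := by nlinarith
  nlinarith

lemma min_one_pow_four_div_sq_le {j l : ℕ} {x : ℝ} (hx₁ : 2 ^ j ≤ 2 * x) (hx₂ : x ≤ 2 ^ j) :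
    min 1 (π * x / 2 ^ (l + 1)) ^ 4 / x ^ 2 ≤ π ^ 4 / 16 / 4 ^ max j l := by
  have hπ := four_le_pi_pow_four_div_sixteen
  have hx : 0 < x := by linarith [pow_pos (two_pos (α := ℝ)) j]
  rcases le_total l j with h | h
  · rw [max_eq_left h]
    calc min 1 (π * x / 2 ^ (l + 1)) ^ 4 / x ^ 2 ≤ 1 ^ 4 / x ^ 2 := by
          gcongr
          exact min_le_left _ _
      _ ≤ 4 / 4 ^ j := by
          rw [div_le_div_iff₀ (by positivity) (by positivity), show (4 : ℝ) ^ j = (2 ^ j) ^ 2 by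
            rw [← pow_mul, pow_mul']; norm_num]
          nlinarith
      _ ≤ _ := by gcongr
  · have h4 : ((2 : ℝ) ^ l) ^ 2 = 4 ^ l := by rw [← pow_mul, mul_comm, pow_mul]; norm_num
    rw [max_eq_right h]
    calc min 1 (π * x / 2 ^ (l + 1)) ^ 4 / x ^ 2 ≤ (π * x / 2 ^ (l + 1)) ^ 4 / x ^ 2 := by
          gcongr
          exact min_le_right _ _
      _ = π ^ 4 / 16 * x ^ 2 / ((2 ^ l) ^ 2) ^ 2 := by
          rw [pow_succ]
          field_simp
          ring
      _ ≤ π ^ 4 / 16 * (2 ^ l) ^ 2 / ((2 ^ l) ^ 2) ^ 2 := by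
          gcongr
          exact hx₂.trans (pow_le_pow_right₀ one_le_two h)
      _ = _ := by
          rw [h4]
          field_simp

lemma sq_norm_Uentry_le {r j l : ℕ} (hj : j < r) (hl : l < r) {ω : ℤ} (hω : ω ∈ bandW j)
    {q : ℕ} (hq : q < numCols l) :
    ‖Uentry r l ω q‖ ^ 2 ≤ π ^ 4 / 16 * (2 ^ l / 4 ^ max j l) := by
  have hbound : 0 ≤ π ^ 4 / 16 * (2 ^ l / 4 ^ max j l) := by positivity
  rcases mem_bandW_cases hω with ⟨rfl, rfl⟩ | ⟨hω₁, hω₂⟩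
  · rcases Uentry_cases r 0 hq with ⟨rfl, he⟩ | ⟨p, hp, he⟩ <;> rw [he]
    · rw [dft_haarPsi_zero]
      norm_num
      linarith [four_le_pi_pow_four_div_sixteen]
    · simpa [dft_haarPhi_zero hl hp] using hbound
  · have hω0 : ω ≠ 0 := by
      rintro rfl
      simp only [Int.cast_zero, abs_zero, mul_zero] at hω₁
      exact (pow_pos two_pos j).not_ge hω₁
    have h2ω : 2 * |(ω : ℝ)| ≤ 2 ^ r :=
      calc 2 * |(ω : ℝ)| ≤ 2 ^ (j + 1) := by rw [pow_succ']; linarith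
        _ ≤ 2 ^ r := pow_le_pow_right₀ one_le_two hj
    rcases Uentry_cases r ω hq with ⟨rfl, he⟩ | ⟨p, hp, he⟩ <;> rw [he]
    · simpa [dft_haarPsi_of_ne_zero hω0 h2ω] using hbound
    · calc ‖dft r (haarPhi r l p) ω‖ ^ 2
          ≤ 2 ^ l * (min 1 (π * |(ω : ℝ)| / 2 ^ (l + 1)) ^ 4 / |(ω : ℝ)| ^ 2) :=
            (sq_norm_dft_haarPhi_le hl hp hω0 h2ω).trans_eq (mul_div_assoc ..)
        _ ≤ 2 ^ l * (π ^ 4 / 16 / 4 ^ max j l) :=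
            mul_le_mul_of_nonneg_left (min_one_pow_four_div_sq_le hω₁ hω₂) (by positivity)
        _ = _ := by ring

/-- For `r ≥ 1` and `0 ≤ j, l ≤ r-1`, the coherence of the Fourier–Haar block satisfies
`μ(U_{jl}) ≤ (π⁴/16) 2^{-j} 2^{-|j-l|}`. -/
theorem coherence_le (r j l : ℕ) (hr : 1 ≤ r) (hj : j ≤ r - 1) (hl : l ≤ r - 1) :
    coherence r j l ≤ (Real.pi^4 / 16) * (2:ℝ)^(-(j:ℝ)) * (2:ℝ)^(-|(j:ℝ) - (l:ℝ)|) := by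
  rw [mul_assoc, two_rpow_neg_mul_two_rpow_neg_abs_sub]
  refine sup'_le _ _ fun ωq hωq => ?_
  rw [mem_product, mem_range] at hωq
  exact sq_norm_Uentry_le (by omega) (by omega) hωq.1 hωq.2
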